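/- Let I_b and I_r be independent sets of a tree T with R(I_b) = R(I_r) =: R, and let F be the forest obtained from T by deleting the closed neighborhood N[R]. Then I_b ⇝ I_r in T if and only if I_b ∩ F ⇝ I_r ∩ F in F. -/

import Mathlib

/-- `I` is an independent set of `G`. -/
def IndepSet {V : Type*} (G : SimpleGraph V) (I : Set V) : Prop :=
  ∀ ⦃u⦄, u ∈ I → ∀ ⦃v⦄, v ∈ I → ¬ G.Adj u v

/-- `B` is obtained from `A` by sliding one token along an edge. -/
def Slide {V : Type*} (G : SimpleGraph V) (A B : Set V) : Prop :=
  ∃ u v, G.Adj u v ∧ A \ B = {u} ∧ B \ A = {v}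

/-- One step of reconfiguration: a slide whose result is independent. -/
def Step {V : Type*} (G : SimpleGraph V) (A B : Set V) : Prop :=
  IndepSet G B ∧ Slide G A B

/-- `I` is reconfigurable to `J` by token sliding. -/
def Reconf {V : Type*} (G : SimpleGraph V) : Set V → Set V → Prop :=
  Relation.ReflTransGen (Step G)

/-- One reconfiguration step restricted to the induced subgraph on `S`. -/
def StepOn {V : Type*} (G : SimpleGraph V) (S : Set V) (A B : Set V) : Prop :=
  B ⊆ S ∧ IndepSet G B ∧ Slide G A B

/-- Reconfigurability within the induced subgraph on `S`. -/
def ReconfOn {V : Type*} (G : SimpleGraph V) (S : Set V) : Set V → Set V → Prop :=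
  Relation.ReflTransGen (StepOn G S)

/-- The token on `u` is `(G, I)`-rigid. -/
def Rigid {V : Type*} (G : SimpleGraph V) (I : Set V) (u : V) : Prop :=
  ∀ J, Reconf G I J → u ∈ J

/-- The token on `u` is rigid for the subgraph induced on `S`, starting from `I ∩ S`. -/
def RigidOn {V : Type*} (G : SimpleGraph V) (S I : Set V) (u : V) : Prop :=
  ∀ J, ReconfOn G S (I ∩ S) J → u ∈ J

/-- The set `R(I)` of vertices carrying `(G, I)`-rigid tokens. -/
def RigidSet {V : Type*} (G : SimpleGraph V) (I : Set V) : Set V :=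
  {u ∈ I | Rigid G I u}

/-- For an edge `{u, v}` of a tree `G`, `SubtreeSide G u v` is the vertex set of the
subtree `T_v^u`: the component of `v` after removing the edge, i.e. vertices strictly
closer to `v` than to `u`. -/
def SubtreeSide {V : Type*} (G : SimpleGraph V) (u v : V) : Set V :=
  {x | G.dist x v < G.dist x u}

/-- The closed neighborhood `N[R]` of a vertex subset `R`. -/
def ClosedNbhd {V : Type*} (G : SimpleGraph V) (R : Set V) : Set V :=
  R ∪ {x | ∃ r ∈ R, G.Adj r x}


/-!
Every configuration reachable from `I_b` contains the rigid set `R` and is independent, so it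
has no token on `N(R)`; hence every slide happens inside `F = T - N[R]`, and removing the fixed
part `R` turns a reconfiguration sequence in `T` into one in `F`. Conversely, `R` is independent
and has no neighbour in `F`, so adding `R` back to every configuration of a sequence in `F`
gives a sequence in `T`.
-/

section

variable {V : Type*} {G : SimpleGraph V} {R A B I J : Set V}

theorem IndepSet.mono (hB : IndepSet G B) (hAB : A ⊆ B) : IndepSet G A :=
  fun _ hu _ hv => hB (hAB hu) (hAB hv)

theorem IndepSet.of_reconf (hI : IndepSet G I) (h : Reconf G I J) : IndepSet G J := by
  induction h with
  | refl => exact hI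
  | tail _ hstep _ => exact hstep.1

theorem IndepSet.inter_closedNbhd (hJ : IndepSet G J) (hRJ : R ⊆ J) :
    J ∩ ClosedNbhd G R = R := by
  ext x
  constructor
  · rintro ⟨hxJ, hxR | ⟨r, hr, hrx⟩⟩
    · exact hxR
    · exact absurd hrx (hJ (hRJ hr) hxJ)
  · exact fun hxR => ⟨hRJ hxR, Or.inl hxR⟩

theorem IndepSet.inter_compl_closedNbhd_union (hJ : IndepSet G J) (hRJ : R ⊆ J) :
    J ∩ (ClosedNbhd G R)ᶜ ∪ R = J := by
  conv_rhs => rw [← Set.inter_union_compl J (ClosedNbhd G R)ᶜ, compl_compl,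
    hJ.inter_closedNbhd hRJ]

theorem IndepSet.union_of_subset_compl_closedNbhd (hB : IndepSet G B) (hR : IndepSet G R)
    (hBS : B ⊆ (ClosedNbhd G R)ᶜ) : IndepSet G (B ∪ R) := by
  rintro x (hxB | hxR) y (hyB | hyR) hxy
  · exact hB hxB hyB hxy
  · exact hBS hxB (Or.inr ⟨y, hyR, hxy.symm⟩)
  · exact hBS hyB (Or.inr ⟨x, hxR, hxy⟩)
  · exact hR hxR hyR hxy

theorem Slide.inter_of_inter_compl_eq {S : Set V} (h : Slide G A B)
    (hAB : A ∩ Sᶜ = B ∩ Sᶜ) : Slide G (A ∩ S) (B ∩ S) := by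
  have sdiff_eq : ∀ {X Y : Set V}, X ∩ Sᶜ = Y ∩ Sᶜ → (X ∩ S) \ (Y ∩ S) = X \ Y := by
    intro X Y hXY
    ext x
    by_cases hx : x ∈ S
    · simp [hx]
    · have : x ∈ X ↔ x ∈ Y := by
        simpa [hx] using congrArg (x ∈ ·) hXY
      simp [hx, this]
  obtain ⟨u, v, huv, hu, hv⟩ := h
  exact ⟨u, v, huv, (sdiff_eq hAB).trans hu, (sdiff_eq hAB.symm).trans hv⟩

theorem Slide.union_of_disjoint (h : Slide G A B) (hA : Disjoint A R) (hB : Disjoint B R) :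
    Slide G (A ∪ R) (B ∪ R) := by
  have sdiff_eq : ∀ {X Y : Set V}, Disjoint X R → (X ∪ R) \ (Y ∪ R) = X \ Y := by
    intro X Y hX
    rw [Set.union_sdiff_distrib, Set.sdiff_eq_empty.2 Set.subset_union_right, Set.union_empty,
      ← Set.sdiff_sdiff, Set.sdiff_sdiff_comm, hX.sdiff_eq_left]
  obtain ⟨u, v, huv, hu, hv⟩ := h
  exact ⟨u, v, huv, (sdiff_eq hA).trans hu, (sdiff_eq hB).trans hv⟩

theorem ReconfOn.subset {S : Set V} (h : ReconfOn G S A B) (hA : A ⊆ S) : B ⊆ S := by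
  rcases Relation.ReflTransGen.cases_tail h with rfl | ⟨_, _, hstep⟩
  exacts [hA, hstep.1]

theorem reconfOn_of_reconf (hI : IndepSet G I) (hR : ∀ J, Reconf G I J → R ⊆ J)
    (h : Reconf G I J) :
    ReconfOn G (ClosedNbhd G R)ᶜ (I ∩ (ClosedNbhd G R)ᶜ) (J ∩ (ClosedNbhd G R)ᶜ) := by
  induction h with
  | refl => exact .refl
  | @tail B C hIB hstep ih =>
    have hIC : Reconf G I C := hIB.tail hstep
    have hBC : B ∩ (ClosedNbhd G R)ᶜᶜ = C ∩ (ClosedNbhd G R)ᶜᶜ := by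
      rw [compl_compl, (hI.of_reconf hIB).inter_closedNbhd (hR B hIB),
        hstep.1.inter_closedNbhd (hR C hIC)]
    exact ih.tail ⟨Set.inter_subset_right, hstep.1.mono Set.inter_subset_left,
      hstep.2.inter_of_inter_compl_eq hBC⟩

theorem reconf_union_of_reconfOn (hR : IndepSet G R) (hA : A ⊆ (ClosedNbhd G R)ᶜ)
    (h : ReconfOn G (ClosedNbhd G R)ᶜ A B) : Reconf G (A ∪ R) (B ∪ R) := by
  have disjoint_of_subset {X : Set V} (hX : X ⊆ (ClosedNbhd G R)ᶜ) : Disjoint X R :=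
    Set.disjoint_left.2 fun _ hx hxR => hX hx (Or.inl hxR)
  induction h with
  | refl => exact .refl
  | @tail B C hAB hstep ih =>
    obtain ⟨hCS, hC, hslide⟩ := hstep
    exact ih.tail ⟨hC.union_of_subset_compl_closedNbhd hR hCS,
      hslide.union_of_disjoint (disjoint_of_subset (ReconfOn.subset hAB hA))
        (disjoint_of_subset hCS)⟩

theorem reconf_of_reconfOn (hI : IndepSet G I) (hRI : R ⊆ I) (hJ : IndepSet G J) (hRJ : R ⊆ J)
    (h : ReconfOn G (ClosedNbhd G R)ᶜ (I ∩ (ClosedNbhd G R)ᶜ) (J ∩ (ClosedNbhd G R)ᶜ)) :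
    Reconf G I J := by
  rw [← hI.inter_compl_closedNbhd_union hRI, ← hJ.inter_compl_closedNbhd_union hRJ]
  exact reconf_union_of_reconfOn (hI.mono hRI) Set.inter_subset_right h

end

theorem reconf_iff_reconf_forest_general {V : Type*} (G : SimpleGraph V)
    (Ib Ir : Set V) (hIb : IndepSet G Ib) (hIr : IndepSet G Ir)
    (hR : RigidSet G Ib = RigidSet G Ir)
    (S : Set V) (hS : S = (ClosedNbhd G (RigidSet G Ib))ᶜ) :
    Reconf G Ib Ir ↔ ReconfOn G S (Ib ∩ S) (Ir ∩ S) := by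
  subst hS
  have hRIr : RigidSet G Ib ⊆ Ir := hR ▸ fun _ hu => hu.1
  exact ⟨reconfOn_of_reconf hIb fun J hJ _ hu => hu.2 J hJ,
    reconf_of_reconfOn hIb (fun _ hu => hu.1) hIr hRIr⟩

theorem reconf_iff_reconf_forest {V : Type*} [Fintype V] (G : SimpleGraph V)
    (hT : G.IsTree) (Ib Ir : Set V) (hIb : IndepSet G Ib) (hIr : IndepSet G Ir)
    (hR : RigidSet G Ib = RigidSet G Ir)
    (S : Set V) (hS : S = (ClosedNbhd G (RigidSet G Ib))ᶜ) :
    Reconf G Ib Ir ↔ ReconfOn G S (Ib ∩ S) (Ir ∩ S) :=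
  reconf_iff_reconf_forest_general G Ib Ir hIb hIr hR S hS
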